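/- arXiv:2312.01441 — 5 statements merged into one kernel-verified Lean document; each statement's English description precedes it below -/
import Mathlib

section
/- Let N ∈ ℕ, let P ∈ ℝ^{N×N} be symmetric positive definite, let ν > 0, let Q_z ∈ ℝ^{N×N} be symmetric negative definite, S_z ∈ ℝ^{N×1}, and R_z ∈ ℝ. Then the symmetric block matrix with block row/column sizes (N, 1, N, 1) given by [[P, P S_z, P, 0],[S_zᵀ P, ν R_z, 0, ν],[P, 0, −ν Q_z⁻¹, 0],[0, ν, 0, 1]] is positive semidefinite if and only if [[Q_z, S_z],[S_zᵀ, R_z]] − ν [[−P⁻¹, 0],[0, 1]] is positive semidefinite. -/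
/-!
Write `T = diag(P, ν)` and `D = diag(-ν Q_z⁻¹, 1)`; both are positive definite. The big LMI has
the shape `[[A, T], [T, D]]`, so by the Schur complement it is semidefinite iff `A - T D⁻¹ T` is.
A block computation gives `ν (A - T D⁻¹ T) = T Y T`, where `Y` is the condensed matrix, and a
congruence by the symmetric invertible `T` preserves semidefiniteness; equivalently, conjugating by
`ν T⁻¹ = diag(ν P⁻¹, 1)` recovers `Y`.
-/

open Matrix
open scoped ComplexOrder

namespace Matrix

theorem posSemidef_smul_iff {n 𝕜 : Type*} [RCLike 𝕜] {M : Matrix n n 𝕜} {c : ℝ} (hc : 0 < c) :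
    (c • M).PosSemidef ↔ M.PosSemidef :=
  ⟨fun h => by simpa [smul_smul, inv_mul_cancel₀ hc.ne'] using h.smul (inv_nonneg.2 hc.le),
    fun h => h.smul hc.le⟩

variable {m n : Type*} [Fintype m] [Fintype n] [DecidableEq m] [DecidableEq n]

theorem PosDef.fromBlocks_zero {𝕜 : Type*} [RCLike 𝕜] {A : Matrix m m 𝕜} {D : Matrix n n 𝕜}
    (hA : A.PosDef) (hD : D.PosDef) : (fromBlocks A 0 0 D).PosDef := by
  have : Invertible A := hA.isUnit.invertible
  have hpsd : (fromBlocks A 0 0 D).PosSemidef := by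
    simpa using (PosDef.fromBlocks₁₁ 0 D hA).2 (by simpa using hD.posSemidef)
  exact hpsd.posDef_iff_isUnit.2 (isUnit_fromBlocks_zero₂₁.2 ⟨hA.isUnit, hD.isUnit⟩)

theorem IsHermitian.posSemidef_conj_iff {R : Type*} [Ring R] [PartialOrder R] [StarRing R]
    {U x : Matrix n n R} (hU : U.IsHermitian) (hU' : IsUnit U) :
    (U * x * U).PosSemidef ↔ x.PosSemidef := by
  simpa only [star_eq_conjTranspose, hU.eq] using hU'.posSemidef_star_left_conjugate_iff

end Matrix

theorem smul_invariance_schur_complement_eq {m n K : Type*} [Fintype m] [Fintype n]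
    [DecidableEq m] [DecidableEq n] [Field K] {P Q : Matrix m m K} (S : Matrix m n K) (R : K)
    {ν : K} (hP : IsUnit P) (hQ : IsUnit Q) (hν : ν ≠ 0) :
    ν • (fromBlocks P (P * S) (Sᵀ * P) ((ν * R) • 1)
        - fromBlocks P 0 0 (ν • 1) * (fromBlocks (-(ν • Q⁻¹)) 0 0 1)⁻¹ * fromBlocks P 0 0 (ν • 1))
      = fromBlocks P 0 0 (ν • 1) * (fromBlocks Q S Sᵀ (R • 1) - ν • fromBlocks (-P⁻¹) 0 0 1)
          * fromBlocks P 0 0 (ν • 1) := by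
  have := hP.invertible
  have := hQ.invertible
  have hDinv : (fromBlocks (-(ν • Q⁻¹)) 0 0 (1 : Matrix n n K))⁻¹
      = fromBlocks (-(ν⁻¹ • Q)) 0 0 1 :=
    inv_eq_right_inv (by simp [fromBlocks_multiply, smul_smul, hν])
  rw [hDinv]
  simp only [sub_eq_add_neg, fromBlocks_neg, fromBlocks_add, fromBlocks_multiply, fromBlocks_smul,
    fromBlocks_inj]
  refine ⟨?_, ?_, ?_, ?_⟩ <;>
    simp [smul_smul, hν, smul_add, Matrix.mul_add, Matrix.add_mul, add_comm]

/-- Equivalence (via two Schur complements and a congruence with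
`diag(ν P⁻¹, 1)`) between the invariance LMI and its condensed form. -/
theorem invariance_LMI_equiv (N : ℕ)
    (P : Matrix (Fin N) (Fin N) ℝ) (hP : P.PosDef)
    (ν : ℝ) (hν : 0 < ν)
    (Qz : Matrix (Fin N) (Fin N) ℝ) (hQz : (-Qz).PosDef)
    (Sz : Matrix (Fin N) (Fin 1) ℝ) (Rz : ℝ) :
    (Matrix.fromBlocks
        (Matrix.fromBlocks P (P * Sz) (Sz.transpose * P)
          ((ν * Rz) • (1 : Matrix (Fin 1) (Fin 1) ℝ)))
        (Matrix.fromBlocks P 0 0 (ν • (1 : Matrix (Fin 1) (Fin 1) ℝ)))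
        (Matrix.fromBlocks P 0 0 (ν • (1 : Matrix (Fin 1) (Fin 1) ℝ)))
        (Matrix.fromBlocks (-(ν • Qz⁻¹)) 0 0 (1 : Matrix (Fin 1) (Fin 1) ℝ))).PosSemidef
      ↔ (Matrix.fromBlocks Qz Sz Sz.transpose (Rz • (1 : Matrix (Fin 1) (Fin 1) ℝ))
          - ν • Matrix.fromBlocks (-P⁻¹) 0 0 (1 : Matrix (Fin 1) (Fin 1) ℝ)).PosSemidef := by
  have hQ : IsUnit Qz := by simpa using hQz.isUnit.neg
  have := hQ.invertible
  have hT : (fromBlocks P 0 0 (ν • 1 : Matrix (Fin 1) (Fin 1) ℝ)).PosDef :=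
    hP.fromBlocks_zero (PosDef.one.smul hν)
  have hD : (fromBlocks (-(ν • Qz⁻¹)) 0 0 (1 : Matrix (Fin 1) (Fin 1) ℝ)).PosDef := by
    have hneg : (-Qz)⁻¹ = -Qz⁻¹ := inv_eq_right_inv (by rw [neg_mul_neg, mul_inv_of_invertible])
    rw [← smul_neg, ← hneg]
    exact (hQz.inv.smul hν).fromBlocks_zero PosDef.one
  have := hD.isUnit.invertible
  nth_rw 2 [← hT.isHermitian.eq]
  rw [PosDef.fromBlocks₂₂ _ _ hD, hT.isHermitian.eq, ← posSemidef_smul_iff hν,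
    smul_invariance_schur_complement_eq Sz Rz hP.isUnit hQ hν.ne',
    hT.isHermitian.posSemidef_conj_iff hT.isUnit]
end

section
/- Let N ∈ ℕ, let P ∈ ℝ^{N×N} be symmetric positive definite, let ν > 0, let Q_z ∈ ℝ^{N×N} be symmetric negative definite, S_z ∈ ℝ^{N×1}, and R_z ∈ ℝ. If the symmetric block matrix with block row/column sizes (N, 1, N, 1) given by [[P, P S_z, P, 0],[S_zᵀ P, ν R_z, 0, ν],[P, 0, −ν Q_z⁻¹, 0],[0, ν, 0, 1]] is positive semidefinite, then every v ∈ ℝ^N with vᵀ P⁻¹ v ≤ 1 satisfies vᵀ Q_z v + 2 S_zᵀ v + R_z ≥ 0. -/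
open Matrix

/-!
Test the LMI against `w = (ν P⁻¹ v, 1, Q_z v, -ν)`: since `P` is symmetric, the quadratic form
`wᵀ M w` of the LMI matrix `M` collapses to `ν² (vᵀ P⁻¹ v - 1) + ν (vᵀ Q_z v + 2 S_zᵀ v + R_z)`.
It is nonnegative, and its first summand is nonpositive when `vᵀ P⁻¹ v ≤ 1`, so the second
bracket is nonnegative as `ν > 0`.
-/

namespace Matrix

variable {l m n o α : Type*} [Fintype l] [Fintype m] [Fintype n] [Fintype o]

theorem sumElim_dotProduct_fromBlocks_mulVec [NonUnitalNonAssocSemiring α]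
    (A : Matrix n l α) (B : Matrix n m α) (C : Matrix o l α) (D : Matrix o m α)
    (x : n → α) (y : o → α) (u : l → α) (w : m → α) :
    Sum.elim x y ⬝ᵥ fromBlocks A B C D *ᵥ Sum.elim u w =
      x ⬝ᵥ A *ᵥ u + x ⬝ᵥ B *ᵥ w + (y ⬝ᵥ C *ᵥ u + y ⬝ᵥ D *ᵥ w) := by
  simp only [fromBlocks_mulVec, sumElim_dotProduct_sumElim, dotProduct_add, Sum.elim_comp_inl,
    Sum.elim_comp_inr]

variable [DecidableEq n] [CommRing α] {A : Matrix n n α}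

theorem mulVec_nonsing_inv_mulVec (h : IsUnit A.det) (v : n → α) : A *ᵥ A⁻¹ *ᵥ v = v := by
  rw [mulVec_mulVec, mul_nonsing_inv _ h, one_mulVec]

theorem nonsing_inv_mulVec_mulVec (h : IsUnit A.det) (v : n → α) : A⁻¹ *ᵥ A *ᵥ v = v := by
  rw [mulVec_mulVec, nonsing_inv_mul _ h, one_mulVec]

end Matrix

noncomputable section InvarianceLMI

variable {N : ℕ} (P Qz : Matrix (Fin N) (Fin N) ℝ) (ν : ℝ) (Sz : Matrix (Fin N) (Fin 1) ℝ) (Rz : ℝ)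

def invarianceLMI :
    Matrix ((Fin N ⊕ Fin 1) ⊕ (Fin N ⊕ Fin 1)) ((Fin N ⊕ Fin 1) ⊕ (Fin N ⊕ Fin 1)) ℝ :=
  fromBlocks
    (fromBlocks P (P * Sz) (Szᵀ * P) ((ν * Rz) • 1))
    (fromBlocks P 0 0 (ν • 1))
    (fromBlocks P 0 0 (ν • 1))
    (fromBlocks (-(ν • Qz⁻¹)) 0 0 1)

def invarianceLMI.testVector (v : Fin N → ℝ) : (Fin N ⊕ Fin 1) ⊕ (Fin N ⊕ Fin 1) → ℝ :=
  Sum.elim (Sum.elim (ν • P⁻¹ *ᵥ v) fun _ => 1) (Sum.elim (Qz *ᵥ v) fun _ => -ν)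

variable {P Qz}

theorem invarianceLMI_quadForm_testVector (hP : P.IsSymm) (hPu : IsUnit P.det)
    (hQu : IsUnit Qz.det) (v : Fin N → ℝ) :
    invarianceLMI.testVector P Qz ν v ⬝ᵥ
        invarianceLMI P Qz ν Sz Rz *ᵥ invarianceLMI.testVector P Qz ν v =
      ν ^ 2 * (v ⬝ᵥ P⁻¹ *ᵥ v - 1) + ν * (v ⬝ᵥ Qz *ᵥ v + 2 * (v ⬝ᵥ fun i => Sz i 0) + Rz) := by
  have hPx : P *ᵥ ν • P⁻¹ *ᵥ v = ν • v := by rw [mulVec_smul, mulVec_nonsing_inv_mulVec hPu]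
  have hxP (w : Fin N → ℝ) : (ν • P⁻¹ *ᵥ v) ⬝ᵥ P *ᵥ w = ν * (v ⬝ᵥ w) := by
    rw [dotProduct_mulVec, ← mulVec_transpose, hP.eq, hPx, smul_dotProduct, smul_eq_mul]
  have hSz : Sz *ᵥ (fun _ => 1) = fun i => Sz i 0 := by
    ext i; simp [mulVec, dotProduct]
  have hconst (a b : ℝ) : (fun _ : Fin 1 => a) ⬝ᵥ (fun _ => b) = a * b := by simp [dotProduct]
  simp only [invarianceLMI, invarianceLMI.testVector, sumElim_dotProduct_fromBlocks_mulVec, hxP,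
    ← mulVec_mulVec, hPx, hSz, zero_mulVec, dotProduct_zero, zero_dotProduct, neg_mulVec,
    smul_mulVec, nonsing_inv_mulVec_mulVec hQu, one_mulVec, dotProduct_smul, smul_dotProduct,
    neg_dotProduct, smul_eq_mul, dotProduct_mulVec _ Szᵀ, vecMul_transpose, hconst,
    dotProduct_comm (P⁻¹ *ᵥ v), dotProduct_comm (Qz *ᵥ v), dotProduct_comm (fun i => Sz i 0)]
  ring

end InvarianceLMI

/-- If the invariance LMI holds, then the ellipsoid
`{v : vᵀ P⁻¹ v ≤ 1}` is contained in the uncertainty region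
`{v : vᵀ Q_z v + 2 S_zᵀ v + R_z ≥ 0}`. -/
theorem invariance_LMI_implies_inclusion (N : ℕ)
    (P : Matrix (Fin N) (Fin N) ℝ) (hP : P.PosDef)
    (ν : ℝ) (hν : 0 < ν)
    (Qz : Matrix (Fin N) (Fin N) ℝ) (hQz : (-Qz).PosDef)
    (Sz : Matrix (Fin N) (Fin 1) ℝ) (Rz : ℝ)
    (hLMI : (Matrix.fromBlocks
        (Matrix.fromBlocks P (P * Sz) (Sz.transpose * P)
          ((ν * Rz) • (1 : Matrix (Fin 1) (Fin 1) ℝ)))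
        (Matrix.fromBlocks P 0 0 (ν • (1 : Matrix (Fin 1) (Fin 1) ℝ)))
        (Matrix.fromBlocks P 0 0 (ν • (1 : Matrix (Fin 1) (Fin 1) ℝ)))
        (Matrix.fromBlocks (-(ν • Qz⁻¹)) 0 0 (1 : Matrix (Fin 1) (Fin 1) ℝ))).PosSemidef) :
    ∀ v : Fin N → ℝ, v ⬝ᵥ P⁻¹.mulVec v ≤ 1 →
      0 ≤ v ⬝ᵥ Qz.mulVec v + 2 * (v ⬝ᵥ fun i => Sz i 0) + Rz := by
  intro v hv
  have hPu : IsUnit P.det := (isUnit_iff_isUnit_det P).mp hP.isUnit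
  have hQu : IsUnit Qz.det := (isUnit_iff_isUnit_det Qz).mp (neg_neg Qz ▸ hQz.isUnit.neg)
  have hLMI' : (invarianceLMI P Qz ν Sz Rz).PosSemidef := hLMI
  have hform := hLMI'.dotProduct_mulVec_nonneg (invarianceLMI.testVector P Qz ν v)
  rw [star_trivial, invarianceLMI_quadForm_testVector ν Sz Rz
    (isHermitian_iff_isSymm.mp hP.isHermitian) hPu hQu v] at hform
  have hνsq : 0 ≤ ν ^ 2 * (1 - v ⬝ᵥ P⁻¹ *ᵥ v) := mul_nonneg (sq_nonneg ν) (sub_nonneg.mpr hv)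
  exact nonneg_of_mul_nonneg_right (by linarith) hν
end

section
/- Let N, m ∈ ℕ, δ ∈ ℝ^N, let Λ̃ ∈ ℝ^{m×m} be symmetric, Q ∈ ℝ^{N×N} symmetric, S ∈ ℝ^{N×1}, and R ∈ ℝ. Then, with Δ := I_m ⊗ δ ∈ ℝ^{Nm×m}, the matrix identity [Δ; I_m]ᵀ · [[Λ̃ ⊗ Q, Λ̃ ⊗ S],[Λ̃ ⊗ Sᵀ, Λ̃ ⊗ R]] · [Δ; I_m] = (δᵀ Q δ + 2 Sᵀ δ + R) · Λ̃ holds, where [Δ; I_m] denotes the (Nm+m)×m matrix obtained by stacking Δ on top of I_m. Consequently, if Λ̃ is positive semidefinite and δᵀ Q δ + 2 Sᵀ δ + R ≥ 0, then [Δ; I_m]ᵀ [[Λ̃ ⊗ Q, Λ̃ ⊗ S],[Λ̃ ⊗ Sᵀ, Λ̃ ⊗ R]] [Δ; I_m] is positive semidefinite. -/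
open Matrix
open scoped Kronecker

/-- The Kronecker product `Λ ⊗ v` of an `m × m` matrix with a column vector `v ∈ ℝ^N`. -/
def kronCol {m N : ℕ} (Λ : Matrix (Fin m) (Fin m) ℝ) (v : Fin N → ℝ) :
    Matrix (Fin m × Fin N) (Fin m) ℝ :=
  Matrix.of fun p j => Λ p.1 j * v p.2

/-- The Kronecker product `Λ ⊗ vᵀ` of an `m × m` matrix with a row vector `vᵀ`. -/
def kronRow {m N : ℕ} (Λ : Matrix (Fin m) (Fin m) ℝ) (v : Fin N → ℝ) :
    Matrix (Fin m) (Fin m × Fin N) ℝ :=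
  Matrix.of fun i p => Λ i p.1 * v p.2

/-! Each block obeys the mixed-product rule of the Kronecker product, e.g.
`(I ⊗ δ)ᵀ (Λ ⊗ Q) (I ⊗ δ) = (δᵀ Q δ) Λ`, so the congruence of the block multiplier by
`[I ⊗ δ; I]` collapses to a scalar multiple of `Λ`, and a nonnegative multiple of a positive
semidefinite matrix is positive semidefinite. -/

theorem fromRows_transpose_mul_fromBlocks_mul_fromRows {R l m₁ m₂ : Type*} [CommSemiring R]
    [Fintype m₁] [Fintype m₂] (X : Matrix m₁ l R) (Y : Matrix m₂ l R)
    (A : Matrix m₁ m₁ R) (B : Matrix m₁ m₂ R) (C : Matrix m₂ m₁ R) (D : Matrix m₂ m₂ R) :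
    (fromRows X Y)ᵀ * fromBlocks A B C D * fromRows X Y
      = Xᵀ * A * X + Xᵀ * B * Y + (Yᵀ * C * X + Yᵀ * D * Y) := by
  rw [transpose_fromRows, fromCols_mul_fromBlocks, fromCols_mul_fromRows]
  simp only [Matrix.add_mul, Matrix.mul_assoc]
  abel

section KroneckerColumns

variable {m N : ℕ}

theorem kronCol_transpose_mul_kronCol (A B : Matrix (Fin m) (Fin m) ℝ) (u v : Fin N → ℝ) :
    (kronCol A u)ᵀ * kronCol B v = (u ⬝ᵥ v) • (Aᵀ * B) := by
  ext i j
  simp only [mul_apply, transpose_apply, kronCol, of_apply, Fintype.sum_prod_type,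
    Matrix.smul_apply, smul_eq_mul, dotProduct, Finset.sum_mul, Finset.mul_sum]
  exact Finset.sum_congr rfl fun _ _ => Finset.sum_congr rfl fun _ _ => by ring

theorem kronRow_mul_kronCol (A B : Matrix (Fin m) (Fin m) ℝ) (u v : Fin N → ℝ) :
    kronRow A u * kronCol B v = (u ⬝ᵥ v) • (A * B) := by
  ext i j
  simp only [mul_apply, kronRow, kronCol, of_apply, Fintype.sum_prod_type, Matrix.smul_apply,
    smul_eq_mul, dotProduct, Finset.sum_mul, Finset.mul_sum]
  exact Finset.sum_congr rfl fun _ _ => Finset.sum_congr rfl fun _ _ => by ring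

theorem kronCol_transpose_mul_kronecker_mul_kronCol (A B C : Matrix (Fin m) (Fin m) ℝ)
    (Q : Matrix (Fin N) (Fin N) ℝ) (u v : Fin N → ℝ) :
    (kronCol A u)ᵀ * (B ⊗ₖ Q) * kronCol C v = (u ⬝ᵥ Q *ᵥ v) • (Aᵀ * B * C) := by
  ext i j
  simp only [mul_apply, transpose_apply, kronCol, kroneckerMap_apply, of_apply,
    Fintype.sum_prod_type, Matrix.smul_apply, smul_eq_mul, dotProduct, mulVec, Finset.sum_mul,
    Finset.mul_sum]
  refine Finset.sum_congr rfl fun _ _ => ?_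
  rw [Finset.sum_comm]
  refine Finset.sum_congr rfl fun _ _ => ?_
  rw [Finset.sum_comm]
  exact Finset.sum_congr rfl fun _ _ => Finset.sum_congr rfl fun _ _ => by ring

theorem structuredUncertainty_multiplier_eq_smul (δ : Fin N → ℝ) (Λ : Matrix (Fin m) (Fin m) ℝ)
    (Q : Matrix (Fin N) (Fin N) ℝ) (S : Fin N → ℝ) (R : ℝ) :
    (fromRows (kronCol (1 : Matrix (Fin m) (Fin m) ℝ) δ) (1 : Matrix (Fin m) (Fin m) ℝ))ᵀ
      * fromBlocks (Λ ⊗ₖ Q) (kronCol Λ S) (kronRow Λ S) (R • Λ)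
      * fromRows (kronCol (1 : Matrix (Fin m) (Fin m) ℝ) δ) (1 : Matrix (Fin m) (Fin m) ℝ)
      = (δ ⬝ᵥ Q *ᵥ δ + 2 * (S ⬝ᵥ δ) + R) • Λ := by
  rw [fromRows_transpose_mul_fromBlocks_mul_fromRows,
    kronCol_transpose_mul_kronecker_mul_kronCol, Matrix.mul_assoc (1 : Matrix _ _ ℝ)ᵀ,
    kronCol_transpose_mul_kronCol, Matrix.mul_assoc, kronRow_mul_kronCol, dotProduct_comm δ S]
  simp only [transpose_one, Matrix.one_mul, Matrix.mul_one]
  module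

end KroneckerColumns

theorem structured_multiplier_identity_general (N m : ℕ) (δ : Fin N → ℝ)
    (Λ : Matrix (Fin m) (Fin m) ℝ)
    (Q : Matrix (Fin N) (Fin N) ℝ)
    (S : Fin N → ℝ) (R : ℝ) :
    (Matrix.fromRows (kronCol (1 : Matrix (Fin m) (Fin m) ℝ) δ)
        (1 : Matrix (Fin m) (Fin m) ℝ)).transpose
      * Matrix.fromBlocks (Λ ⊗ₖ Q) (kronCol Λ S) (kronRow Λ S) (R • Λ)
      * Matrix.fromRows (kronCol (1 : Matrix (Fin m) (Fin m) ℝ) δ)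
          (1 : Matrix (Fin m) (Fin m) ℝ)
      = (δ ⬝ᵥ Q.mulVec δ + 2 * (S ⬝ᵥ δ) + R) • Λ
    ∧ (Λ.PosSemidef → 0 ≤ δ ⬝ᵥ Q.mulVec δ + 2 * (S ⬝ᵥ δ) + R →
        ((Matrix.fromRows (kronCol (1 : Matrix (Fin m) (Fin m) ℝ) δ)
            (1 : Matrix (Fin m) (Fin m) ℝ)).transpose
          * Matrix.fromBlocks (Λ ⊗ₖ Q) (kronCol Λ S) (kronRow Λ S) (R • Λ)
          * Matrix.fromRows (kronCol (1 : Matrix (Fin m) (Fin m) ℝ) δ)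
              (1 : Matrix (Fin m) (Fin m) ℝ)).PosSemidef) := by
  have identity := structuredUncertainty_multiplier_eq_smul δ Λ Q S R
  exact ⟨identity, fun hΛ hq => identity ▸ hΛ.smul hq⟩

/-- The structured uncertainty `Δ = I_m ⊗ δ` satisfies the quadratic
multiplier identity `[Δ; I]ᵀ [[Λ̃⊗Q, Λ̃⊗S],[Λ̃⊗Sᵀ, Λ̃⊗R]] [Δ; I] = (δᵀQδ + 2Sᵀδ + R) Λ̃`; in
particular, if `Λ̃ ⪰ 0` and `δᵀQδ + 2Sᵀδ + R ≥ 0`, the left-hand side is positive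
semidefinite. -/
theorem structured_multiplier_identity (N m : ℕ) (δ : Fin N → ℝ)
    (Λ : Matrix (Fin m) (Fin m) ℝ) (hΛ : Λ.IsSymm)
    (Q : Matrix (Fin N) (Fin N) ℝ) (hQ : Q.IsSymm)
    (S : Fin N → ℝ) (R : ℝ) :
    (Matrix.fromRows (kronCol (1 : Matrix (Fin m) (Fin m) ℝ) δ)
        (1 : Matrix (Fin m) (Fin m) ℝ)).transpose
      * Matrix.fromBlocks (Λ ⊗ₖ Q) (kronCol Λ S) (kronRow Λ S) (R • Λ)
      * Matrix.fromRows (kronCol (1 : Matrix (Fin m) (Fin m) ℝ) δ)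
          (1 : Matrix (Fin m) (Fin m) ℝ)
      = (δ ⬝ᵥ Q.mulVec δ + 2 * (S ⬝ᵥ δ) + R) • Λ
    ∧ (Λ.PosSemidef → 0 ≤ δ ⬝ᵥ Q.mulVec δ + 2 * (S ⬝ᵥ δ) + R →
        ((Matrix.fromRows (kronCol (1 : Matrix (Fin m) (Fin m) ℝ) δ)
            (1 : Matrix (Fin m) (Fin m) ℝ)).transpose
          * Matrix.fromBlocks (Λ ⊗ₖ Q) (kronCol Λ S) (kronRow Λ S) (R • Λ)
          * Matrix.fromRows (kronCol (1 : Matrix (Fin m) (Fin m) ℝ) δ)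
              (1 : Matrix (Fin m) (Fin m) ℝ)).PosSemidef) :=
  structured_multiplier_identity_general N m δ Λ Q S R
end

section
/- Let ρ, λ ∈ ℝ with λ ≠ 2ρ. Let x₁, x₂ : ℝ → ℝ be differentiable and u : ℝ → ℝ be such that for all t ∈ ℝ: x₁'(t) = ρ x₁(t) and x₂'(t) = λ (x₂(t) − x₁(t)²) + u(t). Define z₁(t) := x₁(t), z₂(t) := x₂(t), and z₃(t) := x₂(t) − (λ/(λ − 2ρ)) x₁(t)². Then for all t ∈ ℝ: z₁'(t) = ρ z₁(t), z₂'(t) = 2ρ z₂(t) + (λ − 2ρ) z₃(t) + u(t), and z₃'(t) = λ z₃(t) + u(t). -/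
/-! Since `x₁` is an eigenfunction of the flow with rate `ρ`, so is `x₁ ^ 2` with rate `2ρ`.
The coefficient `c = λ / (λ - 2ρ)` is the one solving `c (λ - 2ρ) = λ`, which is exactly what makes
the `x₁ ^ 2` terms cancel in `d/dt (x₂ - c x₁²) - λ (x₂ - c x₁²)`. -/

theorem HasDerivAt.pow_of_linear {𝕜 : Type*} [NontriviallyNormedField 𝕜] {f : 𝕜 → 𝕜}
    {ρ t : 𝕜} (hf : HasDerivAt f (ρ * f t) t) (n : ℕ) :
    HasDerivAt (fun s => f s ^ n) (n * ρ * f t ^ n) t := by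
  refine (hf.pow n).congr_deriv ?_
  rcases n with _ | n
  · simp
  · push_cast
    ring

section Lifting

variable {ρ lam c : ℝ}

theorem lifted_drift_eq (hc : c * (lam - 2 * ρ) = lam) (x₁ x₂ v : ℝ) :
    2 * ρ * x₂ + (lam - 2 * ρ) * (x₂ - c * x₁ ^ 2) + v = lam * (x₂ - x₁ ^ 2) + v := by
  linear_combination (-x₁ ^ 2) * hc

theorem hasDerivAt_lifted_coordinate (hc : c * (lam - 2 * ρ) = lam) {x₁ x₂ : ℝ → ℝ} {v t : ℝ}
    (h1 : HasDerivAt x₁ (ρ * x₁ t) t)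
    (h2 : HasDerivAt x₂ (lam * (x₂ t - x₁ t ^ 2) + v) t) :
    HasDerivAt (fun s => x₂ s - c * x₁ s ^ 2) (lam * (x₂ t - c * x₁ t ^ 2) + v) t := by
  refine (h2.sub ((h1.pow_of_linear 2).const_mul c)).congr_deriv ?_
  push_cast
  linear_combination (x₁ t ^ 2) * hc

end Lifting

/-- Exact finite-dimensional linear lifted representation of the system
`ẋ₁ = ρ x₁`, `ẋ₂ = λ(x₂ − x₁²) + u` under the Koopman lifting
`z = (x₁, x₂, x₂ − (λ/(λ−2ρ)) x₁²)`:
the lifted state satisfies `ż₁ = ρ z₁`, `ż₂ = 2ρ z₂ + (λ−2ρ) z₃ + u`, `ż₃ = λ z₃ + u`. -/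
theorem koopman_lifting_exact (ρ lam : ℝ) (hlam : lam ≠ 2 * ρ)
    (x₁ x₂ u : ℝ → ℝ)
    (h1 : ∀ t, HasDerivAt x₁ (ρ * x₁ t) t)
    (h2 : ∀ t, HasDerivAt x₂ (lam * (x₂ t - (x₁ t) ^ 2) + u t) t)
    (z₁ z₂ z₃ : ℝ → ℝ)
    (hz₁ : z₁ = fun t => x₁ t)
    (hz₂ : z₂ = fun t => x₂ t)
    (hz₃ : z₃ = fun t => x₂ t - lam / (lam - 2 * ρ) * (x₁ t) ^ 2) :
    ∀ t : ℝ,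
      HasDerivAt z₁ (ρ * z₁ t) t ∧
      HasDerivAt z₂ (2 * ρ * z₂ t + (lam - 2 * ρ) * z₃ t + u t) t ∧
      HasDerivAt z₃ (lam * z₃ t + u t) t := by
  subst hz₁ hz₂ hz₃
  have hc : lam / (lam - 2 * ρ) * (lam - 2 * ρ) = lam :=
    div_mul_cancel₀ lam (sub_ne_zero.mpr hlam)
  intro t
  refine ⟨h1 t, ?_, hasDerivAt_lifted_coordinate hc (h1 t) (h2 t)⟩
  rw [lifted_drift_eq hc]
  exact h2 t
end

section
/- Let N, m ∈ ℕ, L ∈ ℝ^{m×N}, L_w ∈ ℝ^{m×Nm}, let Λ ∈ ℝ^{m×m} be invertible, let P ∈ ℝ^{N×N} be invertible, and let v ∈ ℝ^N be such that I_m − L_w (Λ⁻¹ ⊗ v) ∈ ℝ^{m×m} is invertible (where Λ⁻¹ ⊗ v ∈ ℝ^{Nm×m} is the Kronecker product of Λ⁻¹ with the column vector v). Define K := L P⁻¹ and K_w := L_w (Λ⁻¹ ⊗ I_N). Then u := (I_m − L_w(Λ⁻¹ ⊗ v))⁻¹ L P⁻¹ v is the unique solution of the implicit feedback equation u = K v +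 K_w (I_m ⊗ v) u. -/
/-! Since `kronCol 1 v` is `I_m ⊗ v`, the mixed-product identity `(Λ⁻¹ ⊗ I_N)(I_m ⊗ v) = Λ⁻¹ ⊗ v`
collapses the scheduling term to `M u` with `M = L_w (Λ⁻¹ ⊗ v)`. The implicit feedback equation
then reads `(I_m − M) u = K v`, whose unique solution is `(I_m − M)⁻¹ K v`. -/

open Matrix
open scoped Kronecker

theorem kroneckerMap_one_mulVec_kronCol_mulVec {m N : ℕ} (A : Matrix (Fin m) (Fin m) ℝ)
    (v : Fin N → ℝ) (u : Fin m → ℝ) :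
    (A ⊗ₖ (1 : Matrix (Fin N) (Fin N) ℝ)) *ᵥ (kronCol 1 v *ᵥ u) = kronCol A v *ᵥ u := by
  ext ⟨i, k⟩
  simp [kronCol, mulVec, dotProduct, Fintype.sum_prod_type, one_apply,
    mul_left_comm, mul_assoc]

section FixedPoint

variable {n R : Type*} [Fintype n] [DecidableEq n] [CommRing R]

theorem eq_inv_mulVec_iff_mulVec_eq {A : Matrix n n R} (hA : IsUnit A.det) (b u : n → R) :
    u = A⁻¹ *ᵥ b ↔ A *ᵥ u = b := by
  constructor
  · rintro rfl
    rw [mulVec_mulVec, mul_nonsing_inv A hA, one_mulVec]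
  · rintro rfl
    rw [mulVec_mulVec, nonsing_inv_mul A hA, one_mulVec]

theorem eq_add_mulVec_iff_eq_inv_sub_mulVec {M : Matrix n n R} (hM : IsUnit (1 - M).det)
    (b u : n → R) : u = b + M *ᵥ u ↔ u = (1 - M)⁻¹ *ᵥ b := by
  rw [eq_inv_mulVec_iff_mulVec_eq hM, sub_mulVec, one_mulVec, sub_eq_iff_eq_add]

end FixedPoint

theorem explicit_feedback_unique_solution_general (N m : ℕ)
    (L : Matrix (Fin m) (Fin N) ℝ) (Lw : Matrix (Fin m) (Fin m × Fin N) ℝ)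
    (Λ : Matrix (Fin m) (Fin m) ℝ)
    (P : Matrix (Fin N) (Fin N) ℝ)
    (v : Fin N → ℝ)
    (hinv : IsUnit ((1 : Matrix (Fin m) (Fin m) ℝ) - Lw * kronCol Λ⁻¹ v).det) :
    (((1 : Matrix (Fin m) (Fin m) ℝ) - Lw * kronCol Λ⁻¹ v)⁻¹ * (L * P⁻¹)).mulVec v
      = (L * P⁻¹).mulVec v
        + (Lw * (Λ⁻¹ ⊗ₖ (1 : Matrix (Fin N) (Fin N) ℝ))).mulVec
            ((kronCol (1 : Matrix (Fin m) (Fin m) ℝ) v).mulVec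
              ((((1 : Matrix (Fin m) (Fin m) ℝ) - Lw * kronCol Λ⁻¹ v)⁻¹
                * (L * P⁻¹)).mulVec v))
    ∧ ∀ u' : Fin m → ℝ,
        u' = (L * P⁻¹).mulVec v
          + (Lw * (Λ⁻¹ ⊗ₖ (1 : Matrix (Fin N) (Fin N) ℝ))).mulVec
              ((kronCol (1 : Matrix (Fin m) (Fin m) ℝ) v).mulVec u') →
        u' = (((1 : Matrix (Fin m) (Fin m) ℝ) - Lw * kronCol Λ⁻¹ v)⁻¹
          * (L * P⁻¹)).mulVec v := by
  set M := Lw * kronCol Λ⁻¹ v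
  set K := L * P⁻¹
  have scheduling (u : Fin m → ℝ) :
      (Lw * (Λ⁻¹ ⊗ₖ (1 : Matrix (Fin N) (Fin N) ℝ))) *ᵥ (kronCol 1 v *ᵥ u) = M *ᵥ u := by
    rw [← mulVec_mulVec, kroneckerMap_one_mulVec_kronCol_mulVec, mulVec_mulVec]
  simp only [scheduling]
  rw [← mulVec_mulVec]
  exact ⟨(eq_add_mulVec_iff_eq_inv_sub_mulVec hinv _ _).2 rfl,
    fun u' => (eq_add_mulVec_iff_eq_inv_sub_mulVec hinv _ _).1⟩

/-- The explicit nonlinear feedback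
`u = (I_m − L_w(Λ⁻¹ ⊗ v))⁻¹ L P⁻¹ v` is the unique solution of the implicit gain-scheduled
feedback equation `u = K v + K_w (I_m ⊗ v) u` with `K = L P⁻¹` and `K_w = L_w (Λ⁻¹ ⊗ I_N)`. -/
theorem explicit_feedback_unique_solution (N m : ℕ)
    (L : Matrix (Fin m) (Fin N) ℝ) (Lw : Matrix (Fin m) (Fin m × Fin N) ℝ)
    (Λ : Matrix (Fin m) (Fin m) ℝ) (hΛ : IsUnit Λ.det)
    (P : Matrix (Fin N) (Fin N) ℝ) (hP : IsUnit P.det)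
    (v : Fin N → ℝ)
    (hinv : IsUnit ((1 : Matrix (Fin m) (Fin m) ℝ) - Lw * kronCol Λ⁻¹ v).det) :
    (((1 : Matrix (Fin m) (Fin m) ℝ) - Lw * kronCol Λ⁻¹ v)⁻¹ * (L * P⁻¹)).mulVec v
      = (L * P⁻¹).mulVec v
        + (Lw * (Λ⁻¹ ⊗ₖ (1 : Matrix (Fin N) (Fin N) ℝ))).mulVec
            ((kronCol (1 : Matrix (Fin m) (Fin m) ℝ) v).mulVec
              ((((1 : Matrix (Fin m) (Fin m) ℝ) - Lw * kronCol Λ⁻¹ v)⁻¹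
                * (L * P⁻¹)).mulVec v))
    ∧ ∀ u' : Fin m → ℝ,
        u' = (L * P⁻¹).mulVec v
          + (Lw * (Λ⁻¹ ⊗ₖ (1 : Matrix (Fin N) (Fin N) ℝ))).mulVec
              ((kronCol (1 : Matrix (Fin m) (Fin m) ℝ) v).mulVec u') →
        u' = (((1 : Matrix (Fin m) (Fin m) ℝ) - Lw * kronCol Λ⁻¹ v)⁻¹
          * (L * P⁻¹)).mulVec v :=
  explicit_feedback_unique_solution_general N m L Lw Λ P v hinv
end
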